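/- Let X be a complete Hausdorff locally convex topological vector space with the following Radon–Nikodym property with respect to (Ω, Σ, μ): every vector measure m : Σ → X of bounded variation with m ≪ μ is the indefinite integral of an integrable by seminorm function. Then X is B-locally convex with respect to (Ω, Σ, μ). -/

import Mathlib

open MeasureTheory Filter Topology

variable {Ω : Type*} [MeasurableSpace Ω]

/-- A measurable simple function: finitely many values and measurable fibers. -/
def IsMeasSimple {X : Type*} (s : Ω → X) : Prop :=
  (Set.range s).Finite ∧ ∀ x : X, MeasurableSet (s ⁻¹' {x})

/-- Integral of a (measurable simple) function `s` over `E`: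
`∑_{x ∈ range s} μ(E ∩ s⁻¹{x}) • x`. -/
noncomputable def simpleIntegral {X : Type*} [AddCommGroup X] [Module ℝ X]
    (μ : Measure Ω) (s : Ω → X) (E : Set Ω) : X :=
  ∑ᶠ x : X, (μ (E ∩ s ⁻¹' {x})).toReal • x

/-- `f` is `p`-strongly measurable. -/
def IsPStronglyMeasurable {X : Type*} [AddCommGroup X] [Module ℝ X]
    (μ : Measure Ω) (p : Seminorm ℝ X) (f : Ω → X) : Prop :=
  ∃ (fn : ℕ → Ω → X) (Z : Set Ω), (∀ n, IsMeasSimple (fn n)) ∧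
    MeasurableSet Z ∧ μ Z = 0 ∧
    ∀ t ∉ Z, Tendsto (fun n => p (fn n t - f t)) atTop (𝓝 0)

/-- `(fn, Z)` witnesses that `f` is `p`-Bochner integrable: conditions (i), (ii)
and (iii) of the definition of `p`-Bochner integrability. -/
def IsPBochnerWitness {X : Type*} [AddCommGroup X] [Module ℝ X]
    (μ : Measure Ω) (p : Seminorm ℝ X) (f : Ω → X) (fn : ℕ → Ω → X) (Z : Set Ω) : Prop :=
  (∀ n, IsMeasSimple (fn n)) ∧ MeasurableSet Z ∧ μ Z = 0 ∧
  (∀ t ∉ Z, Tendsto (fun n => p (fn n t - f t)) atTop (𝓝 0)) ∧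
  (∀ n, Integrable (fun t => p (fn n t - f t)) μ) ∧
  Tendsto (fun n => ∫ t, p (fn n t - f t) ∂μ) atTop (𝓝 0) ∧
  ∀ E : Set Ω, MeasurableSet E → ∃ x : X,
    Tendsto (fun n => p (x - simpleIntegral μ (fn n) E)) atTop (𝓝 0)

/-- `f` is `p`-Bochner integrable. -/
def IsPBochner {X : Type*} [AddCommGroup X] [Module ℝ X]
    (μ : Measure Ω) (p : Seminorm ℝ X) (f : Ω → X) : Prop :=
  ∃ (fn : ℕ → Ω → X) (Z : Set Ω), IsPBochnerWitness μ p f fn Z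

/-- `x` is a `p`-integral of `f` over `E`. -/
def IsPIntegral {X : Type*} [AddCommGroup X] [Module ℝ X]
    (μ : Measure Ω) (p : Seminorm ℝ X) (f : Ω → X) (E : Set Ω) (x : X) : Prop :=
  ∃ (fn : ℕ → Ω → X) (Z : Set Ω), IsPBochnerWitness μ p f fn Z ∧
    Tendsto (fun n => p (x - simpleIntegral μ (fn n) E)) atTop (𝓝 0)

/-- `f` is integrable by seminorm, with `I E` as its integral over each measurable `E`
(the vector `I E` is independent of the seminorm). -/
def IntegrableBySeminormWith {X : Type*} [AddCommGroup X] [Module ℝ X] [TopologicalSpace X]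
    (μ : Measure Ω) (f : Ω → X) (I : Set Ω → X) : Prop :=
  ∃ F : Seminorm ℝ X → ℕ → Ω → X,
    (∀ p : Seminorm ℝ X, Continuous ⇑p → ∃ Z : Set Ω,
      (∀ n, IsMeasSimple (F p n)) ∧ MeasurableSet Z ∧ μ Z = 0 ∧
      (∀ t ∉ Z, Tendsto (fun n => p (F p n t - f t)) atTop (𝓝 0)) ∧
      (∀ n, Integrable (fun t => p (F p n t - f t)) μ) ∧
      Tendsto (fun n => ∫ t, p (F p n t - f t) ∂μ) atTop (𝓝 0)) ∧
    ∀ E : Set Ω, MeasurableSet E → ∀ p : Seminorm ℝ X, Continuous ⇑p →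
      Tendsto (fun n => p (I E - simpleIntegral μ (F p n) E)) atTop (𝓝 0)

/-- `f` is integrable by seminorm. -/
def IntegrableBySeminorm {X : Type*} [AddCommGroup X] [Module ℝ X] [TopologicalSpace X]
    (μ : Measure Ω) (f : Ω → X) : Prop :=
  ∃ I : Set Ω → X, IntegrableBySeminormWith μ f I

/-- A countably additive vector measure on the measurable sets of `Ω`. -/
def IsVectorMeasureOn {X : Type*} [AddCommMonoid X] [TopologicalSpace X]
    (m : Set Ω → X) : Prop :=
  ∀ E : ℕ → Set Ω, (∀ n, MeasurableSet (E n)) → Pairwise (Function.onFun Disjoint E) →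
    Tendsto (fun N => ∑ n ∈ Finset.range N, m (E n)) atTop (𝓝 (m (⋃ n, E n)))

/-- `m` is of bounded variation: for every continuous seminorm `p`, the sums
`∑_{A ∈ π} p (m A)` over finite measurable partitions `π` of `Ω` are bounded. -/
def HasBoundedVariation {X : Type*} [AddCommGroup X] [Module ℝ X] [TopologicalSpace X]
    (m : Set Ω → X) : Prop :=
  ∀ p : Seminorm ℝ X, Continuous ⇑p → ∃ C : ℝ,
    ∀ π : Finset (Set Ω), (∀ A ∈ π, MeasurableSet A) →
      ((π : Set (Set Ω)).PairwiseDisjoint id) → ⋃₀ (π : Set (Set Ω)) = Set.univ →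
      ∑ A ∈ π, p (m A) ≤ C

/-- `m` has locally relatively compact average range: for every measurable `E` of
positive measure, the set `{ m(A)/μ(A) : A ⊆ E measurable, μ A > 0 }` is relatively
compact in `X`. -/
def HasLocRelCompactAvgRange {X : Type*} [AddCommGroup X] [Module ℝ X] [TopologicalSpace X]
    (μ : Measure Ω) (m : Set Ω → X) : Prop :=
  ∀ E : Set Ω, MeasurableSet E → 0 < μ E →
    IsCompact (closure {x : X | ∃ A : Set Ω, MeasurableSet A ∧ A ⊆ E ∧ 0 < μ A ∧
      x = (μ A).toReal⁻¹ • m A})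

/-- `X` is a `B`-locally convex space with respect to `(Ω, Σ, μ)`: every family
`(f_p)`, indexed by the continuous seminorms on `X`, of pairwise almost the same
Bochner integrable functions admits a function `f : Ω → X` with
`∫ p (f - f_p) dμ = 0` for every continuous seminorm `p`. -/
def IsBLocallyConvex (X : Type*) [AddCommGroup X] [Module ℝ X] [TopologicalSpace X]
    {Ω : Type*} [MeasurableSpace Ω] (μ : Measure Ω) : Prop :=
  ∀ F : Seminorm ℝ X → Ω → X,
    (∀ p : Seminorm ℝ X, Continuous ⇑p → IsPBochner μ p (F p)) →
    (∀ p q : Seminorm ℝ X, Continuous ⇑p → Continuous ⇑q → (∀ x, p x ≤ q x) →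
      ∃ Z : Set Ω, MeasurableSet Z ∧ μ Z = 0 ∧ ∀ t ∉ Z, p (F p t - F q t) = 0) →
    ∃ f : Ω → X, ∀ p : Seminorm ℝ X, Continuous ⇑p →
      Integrable (fun t => p (f t - F p t)) μ ∧ (∫ t, p (f t - F p t) ∂μ) = 0

/-!
For each continuous seminorm `p`, approximate `f_p` by simple functions and take, for every
measurable `E`, a `p`-limit of their integrals over `E`. As `f_p` and `f_q` agree `p`-almost
everywhere when `p ≤ q`, these limits form a Cauchy net indexed by the directed set of
continuous seminorms, and completeness gives a common limit `m E`. The estimate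
`p (m E) ≤ ∫_E p ∘ f_p` makes `m` a `μ`-continuous vector measure of bounded variation, so
the Radon–Nikodym property provides `f`, integrable by seminorm, with indefinite integral `m`.
Then `f - f_p` is approximated by simple functions whose integrals over every set tend to `0`
modulo `p`; on the fibres of each approximant this bounds `∫ p ∘ (f - f_p)` by the
approximation error, which tends to `0`.
-/

section SimpleFunctions

variable {X Y : Type*} {s : Ω → X}

theorem MeasureTheory.SimpleFunc.isMeasSimple (f : SimpleFunc Ω X) : IsMeasSimple f :=
  ⟨f.finite_range, f.measurableSet_fiber⟩

namespace IsMeasSimple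

def toSimpleFunc (hs : IsMeasSimple s) : SimpleFunc Ω X := ⟨s, hs.2, hs.1⟩

theorem const (x : X) : IsMeasSimple fun _ : Ω => x := (SimpleFunc.const Ω x).isMeasSimple

theorem comp (hs : IsMeasSimple s) (φ : X → Y) : IsMeasSimple fun t => φ (s t) :=
  (hs.toSimpleFunc.map φ).isMeasSimple

theorem prodMk (hs : IsMeasSimple s) {s' : Ω → Y} (hs' : IsMeasSimple s') :
    IsMeasSimple fun t => (s t, s' t) :=
  (hs.toSimpleFunc.pair hs'.toSimpleFunc).isMeasSimple

theorem sub [AddGroup X] (hs : IsMeasSimple s) {s' : Ω → X} (hs' : IsMeasSimple s') :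
    IsMeasSimple fun t => s t - s' t :=
  (hs.prodMk hs').comp fun x => x.1 - x.2

theorem measurable_comp (hs : IsMeasSimple s) (φ : X → ℝ) : Measurable fun t => φ (s t) :=
  (hs.toSimpleFunc.map φ).measurable

theorem integrable_comp {μ : Measure Ω} [IsFiniteMeasure μ] (hs : IsMeasSimple s)
    (φ : X → ℝ) : Integrable (fun t => φ (s t)) μ :=
  (hs.toSimpleFunc.map φ).integrable_of_isFiniteMeasure

end IsMeasSimple

theorem sum_setIntegral_preimage_singleton {μ : Measure Ω} (hs : IsMeasSimple s) {g : Ω → ℝ}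
    (hg : Integrable g μ) :
    ∑ x ∈ hs.1.toFinset, ∫ t in s ⁻¹' {x}, g t ∂μ = ∫ t, g t ∂μ := by
  have hcover : ⋃ x ∈ hs.1.toFinset, s ⁻¹' {x} = Set.univ :=
    Set.eq_univ_of_forall fun t => Set.mem_biUnion (hs.1.mem_toFinset.2 ⟨t, rfl⟩) rfl
  rw [← integral_biUnion_finset _ (fun x _ => hs.2 x)
    (fun x _ y _ hxy => (Set.disjoint_singleton.2 hxy).preimage s) fun _ _ => hg.integrableOn,
    hcover, setIntegral_univ]

end SimpleFunctions

section SimpleIntegral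

variable {X : Type*} [AddCommGroup X] [Module ℝ X] {μ : Measure Ω} {s s' : Ω → X}
  {E F : Set Ω}

theorem simpleIntegral_eq_sum {A : Finset X} (hA : Set.range s ⊆ A) (E : Set Ω) :
    simpleIntegral μ s E = ∑ x ∈ A, μ.real (E ∩ s ⁻¹' {x}) • x := by
  refine finsum_eq_finsetSum_of_support_subset _ fun x hx => ?_
  by_contra hxA
  have : s ⁻¹' {x} = ∅ := Set.eq_empty_of_forall_notMem fun t ht => hxA (hA ⟨t, ht⟩)
  simp [this] at hx

theorem simpleIntegral_const_zero (E : Set Ω) : simpleIntegral μ (fun _ => (0 : X)) E = 0 := by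
  rw [simpleIntegral_eq_sum (A := {0}) (by rintro _ ⟨t, rfl⟩; simp)]
  simp

theorem simpleIntegral_preimage_singleton (x : X) :
    simpleIntegral μ s (s ⁻¹' {x}) = μ.real (s ⁻¹' {x}) • x := by
  refine (finsum_eq_single _ x fun y hy => ?_).trans (by rw [Set.inter_self, measureReal_def])
  have : s ⁻¹' {x} ∩ s ⁻¹' {y} = ∅ := by
    ext t; simp only [Set.mem_inter_iff, Set.mem_preimage, Set.mem_singleton_iff]
    exact ⟨fun h => hy (h.2.symm.trans h.1), False.elim⟩
  simp [this]

variable [IsFiniteMeasure μ]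

theorem simpleIntegral_comp {α : Type*} {v : Ω → α} (hv : IsMeasSimple v) (φ : α → X)
    (hE : MeasurableSet E) :
    simpleIntegral μ (fun t => φ (v t)) E =
      ∑ a ∈ hv.1.toFinset, μ.real (E ∩ v ⁻¹' {a}) • φ a := by
  classical
  rw [simpleIntegral_eq_sum (A := hv.1.toFinset.image φ) (by rintro _ ⟨t, rfl⟩; simp)]
  refine Finset.sum_image' _ fun x _ => ?_
  have hfiber : E ∩ (fun t => φ (v t)) ⁻¹' {φ x} =
      ⋃ y ∈ hv.1.toFinset.filter (φ · = φ x), E ∩ v ⁻¹' {y} := by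
    ext t
    simp only [Set.mem_inter_iff, Set.mem_preimage, Set.mem_singleton_iff, Set.mem_iUnion,
      Finset.mem_filter, Set.Finite.mem_toFinset, exists_prop]
    exact ⟨fun ⟨hE, h⟩ => ⟨v t, ⟨⟨t, rfl⟩, h⟩, hE, rfl⟩,
      fun ⟨_, ⟨_, hy⟩, hE, h⟩ => ⟨hE, h ▸ hy⟩⟩
  rw [hfiber, measureReal_biUnion_finset, Finset.sum_smul]
  · exact Finset.sum_congr rfl fun y hy => by rw [(Finset.mem_filter.1 hy).2]
  · exact fun y _ z _ hyz => Disjoint.mono Set.inter_subset_right Set.inter_subset_right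
      ((Set.disjoint_singleton.2 hyz).preimage v)
  · exact fun y _ => hE.inter (hv.2 y)

theorem simpleIntegral_sub (hs : IsMeasSimple s) (hs' : IsMeasSimple s') (hE : MeasurableSet E) :
    simpleIntegral μ (fun t => s t - s' t) E = simpleIntegral μ s E - simpleIntegral μ s' E := by
  have h₁ := simpleIntegral_comp (μ := μ) (hs.prodMk hs') Prod.fst hE
  have h₂ := simpleIntegral_comp (μ := μ) (hs.prodMk hs') Prod.snd hE
  have h₃ := simpleIntegral_comp (μ := μ) (hs.prodMk hs') (fun x => x.1 - x.2) hE
  dsimp only at h₁ h₂ h₃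
  rw [h₁, h₂, h₃, ← Finset.sum_sub_distrib]
  simp_rw [smul_sub]

theorem simpleIntegral_union (hs : IsMeasSimple s) (hF : MeasurableSet F) (hEF : Disjoint E F) :
    simpleIntegral μ s (E ∪ F) = simpleIntegral μ s E + simpleIntegral μ s F := by
  have hA : Set.range s ⊆ hs.1.toFinset := by simp
  rw [simpleIntegral_eq_sum hA, simpleIntegral_eq_sum hA, simpleIntegral_eq_sum hA,
    ← Finset.sum_add_distrib]
  refine Finset.sum_congr rfl fun x _ => ?_
  rw [Set.union_inter_distrib_right, measureReal_union, add_smul]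
  · exact hEF.mono Set.inter_subset_left Set.inter_subset_left
  · exact hF.inter (hs.2 x)

theorem setIntegral_eq_simpleIntegral {u : Ω → ℝ} (hu : IsMeasSimple u) (E : Set Ω) :
    ∫ t in E, u t ∂μ = simpleIntegral μ u E := by
  change ∫ t, hu.toSimpleFunc t ∂μ.restrict E = _
  rw [hu.toSimpleFunc.integral_eq_sum hu.toSimpleFunc.integrable_of_isFiniteMeasure,
    simpleIntegral_eq_sum (s := u) (A := hu.toSimpleFunc.range) hu.toSimpleFunc.coe_range.superset]
  refine Finset.sum_congr rfl fun x _ => ?_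
  change (μ.restrict E).real (u ⁻¹' {x}) • x = _
  rw [measureReal_restrict_apply (hu.2 x), Set.inter_comm]

theorem setIntegral_comp_eq_sum {α : Type*} {v : Ω → α} (hv : IsMeasSimple v) (φ : α → ℝ)
    (hE : MeasurableSet E) :
    ∫ t in E, φ (v t) ∂μ = ∑ a ∈ hv.1.toFinset, μ.real (E ∩ v ⁻¹' {a}) * φ a := by
  rw [setIntegral_eq_simpleIntegral (hv.comp φ) E, simpleIntegral_comp hv φ hE]
  rfl

theorem seminorm_simpleIntegral_le (p : Seminorm ℝ X) (hs : IsMeasSimple s)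
    (hE : MeasurableSet E) : p (simpleIntegral μ s E) ≤ ∫ t in E, p (s t) ∂μ := by
  rw [simpleIntegral_eq_sum (A := hs.1.toFinset) (by simp), setIntegral_comp_eq_sum hs p hE]
  refine (Finset.le_sum_of_subadditive p (map_zero p).le (map_add_le_add p) _ _).trans_eq ?_
  simp_rw [map_smul_eq_mul, Real.norm_of_nonneg measureReal_nonneg]

theorem integral_seminorm_eq_sum (p : Seminorm ℝ X) (hs : IsMeasSimple s) :
    ∫ t, p (s t) ∂μ = ∑ x ∈ hs.1.toFinset, p (simpleIntegral μ s (s ⁻¹' {x})) := by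
  rw [← setIntegral_univ, setIntegral_comp_eq_sum hs p MeasurableSet.univ]
  simp_rw [simpleIntegral_preimage_singleton, map_smul_eq_mul, Set.univ_inter,
    Real.norm_of_nonneg measureReal_nonneg]

end SimpleIntegral

namespace Seminorm

variable {X : Type*} [AddCommGroup X] [Module ℝ X] {p : Seminorm ℝ X} {α : Type*}
  {l : Filter α} {a b : α → X} {x y : X}

theorem tendsto_sub_sub
    (ha : Tendsto (fun n => p (x - a n)) l (𝓝 0))
    (hb : Tendsto (fun n => p (y - b n)) l (𝓝 0)) :
    Tendsto (fun n => p ((x - y) - (a n - b n))) l (𝓝 0) := by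
  refine squeeze_zero (fun _ => apply_nonneg _ _) (fun n => ?_) (by simpa using ha.add hb)
  rw [sub_sub_sub_comm]
  exact map_sub_le_add p _ _

theorem tendsto_add_add
    (ha : Tendsto (fun n => p (x - a n)) l (𝓝 0))
    (hb : Tendsto (fun n => p (y - b n)) l (𝓝 0)) :
    Tendsto (fun n => p ((x + y) - (a n + b n))) l (𝓝 0) := by
  refine squeeze_zero (fun _ => apply_nonneg _ _) (fun n => ?_) (by simpa using ha.add hb)
  rw [add_sub_add_comm]
  exact map_add_le_add p _ _

theorem map_sub_eq_zero_of_tendsto [l.NeBot]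
    (hx : Tendsto (fun n => p (x - a n)) l (𝓝 0))
    (hy : Tendsto (fun n => p (y - a n)) l (𝓝 0)) : p (x - y) = 0 :=
  tendsto_const_nhds_iff.1 <| by simpa only [sub_self, sub_zero] using tendsto_sub_sub hx hy

end Seminorm

section Approximation

variable {X : Type*} [AddCommGroup X] [Module ℝ X] {μ : Measure Ω}
  {p q : Seminorm ℝ X} {f g s : Ω → X} {fn gn : ℕ → Ω → X} {E : Set Ω} {x : X}

theorem aestronglyMeasurable_seminorm_sub (hfn : ∀ n, IsMeasSimple (fn n))
    (hlim : ∀ᵐ t ∂μ, Tendsto (fun n => p (fn n t - f t)) atTop (𝓝 0))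
    (hs : IsMeasSimple s) : AEStronglyMeasurable (fun t => p (s t - f t)) μ := by
  refine (aemeasurable_of_tendsto_metrizable_ae atTop
    (fun n => ((hs.sub (hfn n)).measurable_comp p).aemeasurable) ?_).aestronglyMeasurable
  filter_upwards [hlim] with t ht
  refine tendsto_iff_norm_sub_tendsto_zero.2 (squeeze_zero_norm (fun n => ?_) ht)
  rw [norm_norm, Real.norm_eq_abs]
  refine (abs_sub_map_le_sub p _ _).trans_eq ?_
  rw [sub_sub_sub_cancel_left, map_sub_rev]

/-- Conditions (i) and (ii) of `p`-Bochner integrability, with (i) stated almost everywhere. -/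
structure IsPSimpleApprox (μ : Measure Ω) (p : Seminorm ℝ X) (f : Ω → X)
    (fn : ℕ → Ω → X) : Prop where
  isMeasSimple : ∀ n, IsMeasSimple (fn n)
  ae_tendsto : ∀ᵐ t ∂μ, Tendsto (fun n => p (fn n t - f t)) atTop (𝓝 0)
  integrable : ∀ n, Integrable (fun t => p (fn n t - f t)) μ
  tendsto_integral : Tendsto (fun n => ∫ t, p (fn n t - f t) ∂μ) atTop (𝓝 0)

namespace IsPSimpleApprox

theorem mono (h : IsPSimpleApprox μ q f fn) (hpq : p ≤ q) : IsPSimpleApprox μ p f fn := by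
  have hle n t : p (fn n t - f t) ≤ q (fn n t - f t) := hpq _
  have hlim : ∀ᵐ t ∂μ, Tendsto (fun n => p (fn n t - f t)) atTop (𝓝 0) :=
    h.ae_tendsto.mono fun t ht => squeeze_zero (fun _ => apply_nonneg _ _) (hle · t) ht
  have hint n : Integrable (fun t => p (fn n t - f t)) μ :=
    (h.integrable n).mono' (aestronglyMeasurable_seminorm_sub h.isMeasSimple hlim
      (h.isMeasSimple n)) (ae_of_all _ fun t => by
        rw [Real.norm_of_nonneg (apply_nonneg _ _)]; exact hle n t)
  exact ⟨h.isMeasSimple, hlim, hint,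
    squeeze_zero (fun _ => integral_nonneg fun _ => apply_nonneg _ _)
      (fun n => integral_mono (hint n) (h.integrable n) (hle n)) h.tendsto_integral⟩

theorem sub (hf : IsPSimpleApprox μ p f fn) (hg : IsPSimpleApprox μ p g gn) :
    IsPSimpleApprox μ p (fun t => f t - g t) (fun n t => fn n t - gn n t) := by
  have hle n t : p ((fn n t - gn n t) - (f t - g t)) ≤ p (fn n t - f t) + p (gn n t - g t) := by
    rw [sub_sub_sub_comm]; exact map_sub_le_add p _ _
  have hsimp n : IsMeasSimple fun t => fn n t - gn n t :=
    (hf.isMeasSimple n).sub (hg.isMeasSimple n)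
  have hlim :
      ∀ᵐ t ∂μ, Tendsto (fun n => p ((fn n t - gn n t) - (f t - g t))) atTop (𝓝 0) := by
    filter_upwards [hf.ae_tendsto, hg.ae_tendsto] with t hft hgt
    exact squeeze_zero (fun _ => apply_nonneg _ _) (hle · t) (by simpa using hft.add hgt)
  have hint n : Integrable (fun t => p ((fn n t - gn n t) - (f t - g t))) μ :=
    ((hf.integrable n).add (hg.integrable n)).mono'
      (aestronglyMeasurable_seminorm_sub hsimp hlim (hsimp n)) (ae_of_all _ fun t => by
        rw [Real.norm_of_nonneg (apply_nonneg _ _)]; exact hle n t)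
  refine ⟨hsimp, hlim, hint, squeeze_zero (fun _ => integral_nonneg fun _ => apply_nonneg _ _)
    (fun n => ?_) (by simpa using hf.tendsto_integral.add hg.tendsto_integral)⟩
  exact (integral_mono (hint n) ((hf.integrable n).add (hg.integrable n)) (hle n)).trans_eq
    (integral_add (hf.integrable n) (hg.integrable n))

variable [IsFiniteMeasure μ]

theorem integrable_seminorm_sub (h : IsPSimpleApprox μ p f fn) (hs : IsMeasSimple s) :
    Integrable (fun t => p (s t - f t)) μ := by
  refine (((hs.sub (h.isMeasSimple 0)).integrable_comp p).add (h.integrable 0)).mono'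
    (aestronglyMeasurable_seminorm_sub h.isMeasSimple h.ae_tendsto hs) (ae_of_all _ fun t => ?_)
  rw [Real.norm_of_nonneg (apply_nonneg _ _)]
  exact le_map_sub_add_map_sub p _ _ _

theorem integrable_seminorm (h : IsPSimpleApprox μ p f fn) : Integrable (fun t => p (f t)) μ := by
  simpa using h.integrable_seminorm_sub (IsMeasSimple.const 0)

theorem seminorm_simpleIntegral_sub_le (h : IsPSimpleApprox μ p f fn) (hE : MeasurableSet E)
    (hx : Tendsto (fun n => p (x - simpleIntegral μ (fn n) E)) atTop (𝓝 0))
    (hs : IsMeasSimple s) :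
    p (simpleIntegral μ s E - x) ≤ ∫ t in E, p (s t - f t) ∂μ := by
  have hlim : Tendsto (fun n => (∫ t in E, p (s t - f t) ∂μ) + ∫ t, p (fn n t - f t) ∂μ
      + p (x - simpleIntegral μ (fn n) E)) atTop (𝓝 (∫ t in E, p (s t - f t) ∂μ)) := by
    simpa using (tendsto_const_nhds.add h.tendsto_integral).add hx
  refine ge_of_tendsto' hlim fun n => ?_
  have hsf := (h.integrable_seminorm_sub hs).integrableOn (s := E)
  have hfn := (h.integrable n).integrableOn (s := E)
  calc p (simpleIntegral μ s E - x)
      ≤ p (simpleIntegral μ s E - simpleIntegral μ (fn n) E)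
        + p (simpleIntegral μ (fn n) E - x) := le_map_sub_add_map_sub p _ _ _
    _ = p (simpleIntegral μ (fun t => s t - fn n t) E) + p (x - simpleIntegral μ (fn n) E) := by
        rw [simpleIntegral_sub hs (h.isMeasSimple n) hE, map_sub_rev p _ x]
    _ ≤ (∫ t in E, p (s t - fn n t) ∂μ) + p (x - simpleIntegral μ (fn n) E) := by
        gcongr; exact seminorm_simpleIntegral_le p (hs.sub (h.isMeasSimple n)) hE
    _ ≤ (∫ t in E, (p (s t - f t) + p (fn n t - f t)) ∂μ)
        + p (x - simpleIntegral μ (fn n) E) := by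
        refine add_le_add_left (setIntegral_mono
          ((hs.sub (h.isMeasSimple n)).integrable_comp p).integrableOn (hsf.add hfn) fun t => ?_) _
        show _ ≤ p (s t - f t) + p (fn n t - f t)
        rw [map_sub_rev p (fn n t)]
        exact le_map_sub_add_map_sub p _ _ _
    _ ≤ (∫ t in E, p (s t - f t) ∂μ) + (∫ t, p (fn n t - f t) ∂μ)
        + p (x - simpleIntegral μ (fn n) E) := by
        rw [integral_add hsf hfn]
        exact add_le_add_left (add_le_add_right (setIntegral_le_integral (h.integrable n)
          (ae_of_all _ fun _ => apply_nonneg _ _)) _) _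

theorem seminorm_le_setIntegral (h : IsPSimpleApprox μ p f fn) (hE : MeasurableSet E)
    (hx : Tendsto (fun n => p (x - simpleIntegral μ (fn n) E)) atTop (𝓝 0)) :
    p x ≤ ∫ t in E, p (f t) ∂μ := by
  simpa [simpleIntegral_const_zero] using
    h.seminorm_simpleIntegral_sub_le hE hx (IsMeasSimple.const 0)

end IsPSimpleApprox

end Approximation

section IndefiniteIntegral

variable {X : Type*} [AddCommGroup X] [Module ℝ X] {μ : Measure Ω}
  {p q : Seminorm ℝ X} {f g : Ω → X} {m m' : Set Ω → X} {E F : Set Ω}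

def IsPIndefiniteIntegral (μ : Measure Ω) (p : Seminorm ℝ X) (f : Ω → X) (m : Set Ω → X) :
    Prop :=
  ∃ fn, IsPSimpleApprox μ p f fn ∧ ∀ E, MeasurableSet E →
    Tendsto (fun n => p (m E - simpleIntegral μ (fn n) E)) atTop (𝓝 0)

theorem IsPBochner.exists_isPIndefiniteIntegral (h : IsPBochner μ p f) :
    ∃ m, IsPIndefiniteIntegral μ p f m := by
  obtain ⟨fn, Z, hsimp, -, hZ, hlim, hint, hint0, hI⟩ := h
  choose! m hm using hI
  exact ⟨m, fn, ⟨hsimp, (measure_eq_zero_iff_ae_notMem.1 hZ).mono hlim, hint, hint0⟩, hm⟩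

theorem IntegrableBySeminormWith.isPIndefiniteIntegral {I : Set Ω → X} [TopologicalSpace X]
    (h : IntegrableBySeminormWith μ f I) (hp : Continuous p) : IsPIndefiniteIntegral μ p f I := by
  obtain ⟨F, hF, hI⟩ := h
  obtain ⟨Z, hsimp, -, hZ, hlim, hint, hint0⟩ := hF p hp
  exact ⟨F p, ⟨hsimp, (measure_eq_zero_iff_ae_notMem.1 hZ).mono hlim, hint, hint0⟩,
    fun E hE => hI E hE p hp⟩

namespace IsPIndefiniteIntegral

theorem mono (h : IsPIndefiniteIntegral μ q f m) (hpq : p ≤ q) :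
    IsPIndefiniteIntegral μ p f m :=
  let ⟨fn, hfn, hm⟩ := h
  ⟨fn, hfn.mono hpq, fun E hE =>
    squeeze_zero (fun _ => apply_nonneg _ _) (fun _ => hpq _) (hm E hE)⟩

theorem of_seminorm_sub_eq_zero (h : IsPIndefiniteIntegral μ p f m')
    (hm : ∀ E, MeasurableSet E → p (m E - m' E) = 0) : IsPIndefiniteIntegral μ p f m :=
  let ⟨fn, hfn, hm'⟩ := h
  ⟨fn, hfn, fun E hE => squeeze_zero (fun _ => apply_nonneg _ _)
    (fun _ => (le_map_sub_add_map_sub p _ (m' E) _).trans_eq (by rw [hm E hE, zero_add]))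
    (hm' E hE)⟩

variable [IsFiniteMeasure μ]

theorem sub (hf : IsPIndefiniteIntegral μ p f m) (hg : IsPIndefiniteIntegral μ p g m') :
    IsPIndefiniteIntegral μ p (fun t => f t - g t) (fun E => m E - m' E) :=
  let ⟨fn, hfn, hm⟩ := hf
  let ⟨gn, hgn, hm'⟩ := hg
  ⟨_, hfn.sub hgn, fun E hE => (Seminorm.tendsto_sub_sub (hm E hE) (hm' E hE)).congr fun n => by
    rw [simpleIntegral_sub (hfn.isMeasSimple n) (hgn.isMeasSimple n) hE]⟩

theorem integrable_seminorm (h : IsPIndefiniteIntegral μ p f m) :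
    Integrable (fun t => p (f t)) μ :=
  let ⟨_, hfn, _⟩ := h
  hfn.integrable_seminorm

theorem seminorm_le_setIntegral (h : IsPIndefiniteIntegral μ p f m) (hE : MeasurableSet E) :
    p (m E) ≤ ∫ t in E, p (f t) ∂μ :=
  let ⟨_, hfn, hm⟩ := h
  hfn.seminorm_le_setIntegral hE (hm E hE)

theorem seminorm_union_sub_eq_zero (h : IsPIndefiniteIntegral μ p f m) (hE : MeasurableSet E)
    (hF : MeasurableSet F) (hEF : Disjoint E F) : p (m (E ∪ F) - (m E + m F)) = 0 :=
  let ⟨fn, hfn, hm⟩ := h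
  Seminorm.map_sub_eq_zero_of_tendsto (hm _ (hE.union hF))
    ((Seminorm.tendsto_add_add (hm E hE) (hm F hF)).congr fun n => by
      rw [simpleIntegral_union (hfn.isMeasSimple n) hF hEF])

theorem seminorm_sub_eq_zero_of_ae (hf : IsPIndefiniteIntegral μ p f m)
    (hg : IsPIndefiniteIntegral μ q g m') (hpq : p ≤ q) (hfg : ∀ᵐ t ∂μ, p (f t - g t) = 0)
    (hE : MeasurableSet E) : p (m E - m' E) = 0 :=
  le_antisymm (((hf.sub (hg.mono hpq)).seminorm_le_setIntegral hE).trans_eq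
    (integral_eq_zero_of_ae (ae_restrict_of_ae hfg))) (apply_nonneg _ _)

theorem integral_seminorm_eq_zero (h : IsPIndefiniteIntegral μ p f m)
    (hm : ∀ E, MeasurableSet E → p (m E) = 0) : ∫ t, p (f t) ∂μ = 0 := by
  obtain ⟨fn, hfn, hlim⟩ := h
  have hsimple n : ∫ t, p (fn n t) ∂μ ≤ ∫ t, p (fn n t - f t) ∂μ := by
    rw [integral_seminorm_eq_sum p (hfn.isMeasSimple n),
      ← sum_setIntegral_preimage_singleton (hfn.isMeasSimple n) (hfn.integrable n)]
    refine Finset.sum_le_sum fun x _ => ?_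
    set A := fn n ⁻¹' {x}
    have hA : MeasurableSet A := (hfn.isMeasSimple n).2 x
    calc p (simpleIntegral μ (fn n) A)
        ≤ p (simpleIntegral μ (fn n) A - m A) + p (m A) := by
          simpa only [sub_add_cancel] using
            map_add_le_add p (simpleIntegral μ (fn n) A - m A) (m A)
      _ ≤ ∫ t in A, p (fn n t - f t) ∂μ := by
        rw [hm _ hA, add_zero]
        exact hfn.seminorm_simpleIntegral_sub_le hA (hlim _ hA) (hfn.isMeasSimple n)
  refine le_antisymm (ge_of_tendsto' (by simpa using hfn.tendsto_integral.add hfn.tendsto_integral)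
    fun n => ?_) (integral_nonneg fun _ => apply_nonneg _ _)
  have hint := (hfn.isMeasSimple n).integrable_comp (μ := μ) p
  calc ∫ t, p (f t) ∂μ ≤ ∫ t, (p (fn n t - f t) + p (fn n t)) ∂μ := by
        refine integral_mono hfn.integrable_seminorm ((hfn.integrable n).add hint) fun t => ?_
        simpa [add_comm] using map_sub_le_add p (fn n t) (fn n t - f t)
    _ ≤ (∫ t, p (fn n t - f t) ∂μ) + ∫ t, p (fn n t - f t) ∂μ := by
        rw [integral_add (hfn.integrable n) hint]
        exact add_le_add_right (hsimple n) _

theorem integral_seminorm_sub_eq_zero (hf : IsPIndefiniteIntegral μ p f m)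
    (hg : IsPIndefiniteIntegral μ p g m) :
    Integrable (fun t => p (f t - g t)) μ ∧ ∫ t, p (f t - g t) ∂μ = 0 :=
  ⟨(hf.sub hg).integrable_seminorm, (hf.sub hg).integral_seminorm_eq_zero fun E _ => by simp⟩

end IsPIndefiniteIntegral

end IndefiniteIntegral

section LocallyConvex

variable {X : Type*} [AddCommGroup X] [Module ℝ X]

section Topological

variable [TopologicalSpace X] [IsTopologicalAddGroup X] [ContinuousSMul ℝ X]
  [LocallyConvexSpace ℝ X]

theorem tendsto_of_forall_seminorm {α : Type*} {l : Filter α} {u : α → X} {y : X}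
    (h : ∀ p : Seminorm ℝ X, Continuous p → Tendsto (fun a => p (u a - y)) l (𝓝 0)) :
    Tendsto u l (𝓝 y) := by
  have hX := with_gaugeSeminormFamily (𝕜 := ℝ) (E := X)
  rw [hX.tendsto_nhds]
  exact fun i ε hε => (h _ (hX.continuous_seminorm i)).eventually (gt_mem_nhds hε)

theorem eq_of_forall_seminorm_sub_eq_zero [T2Space X] {x y : X}
    (h : ∀ p : Seminorm ℝ X, Continuous p → p (x - y) = 0) : x = y :=
  tendsto_nhds_unique (l := (atTop : Filter ℕ)) tendsto_const_nhds
    (tendsto_of_forall_seminorm fun p hp => by simp [h p hp])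

end Topological

def ContinuousSeminorm (X : Type*) [AddCommGroup X] [Module ℝ X] [TopologicalSpace X] : Type _ :=
  {p : Seminorm ℝ X // Continuous p}

instance [TopologicalSpace X] : Nonempty (ContinuousSeminorm X) :=
  ⟨⟨0, continuous_const⟩⟩

noncomputable instance [TopologicalSpace X] : SemilatticeSup (ContinuousSeminorm X) :=
  Subtype.semilatticeSup fun _ _ hp hq => by rw [Seminorm.coe_sup]; exact hp.max hq

variable [UniformSpace X] [IsUniformAddGroup X] [ContinuousSMul ℝ X] [LocallyConvexSpace ℝ X]
  [CompleteSpace X]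

theorem exists_forall_seminorm_sub_eq_zero (φ : ContinuousSeminorm X → X)
    (hφ : ∀ P Q : ContinuousSeminorm X, P ≤ Q → P.1 (φ P - φ Q) = 0) :
    ∃ x, ∀ P : ContinuousSeminorm X, P.1 (x - φ P) = 0 := by
  have hsmall (P Q R : ContinuousSeminorm X) (hQ : P ≤ Q) (hR : P ≤ R) :
      P.1 (φ R - φ Q) = 0 := by
    refine le_antisymm ((le_map_sub_add_map_sub P.1 _ (φ (Q ⊔ R)) _).trans ?_) (apply_nonneg _ _)
    have h₁ : P.1 (φ R - φ (Q ⊔ R)) ≤ 0 := (hR _).trans (hφ R _ le_sup_right).le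
    have h₂ : P.1 (φ (Q ⊔ R) - φ Q) ≤ 0 := by
      rw [map_sub_rev]; exact (hQ _).trans (hφ Q _ le_sup_left).le
    linarith
  have hcauchy : CauchySeq φ := by
    rw [cauchySeq_iff_tendsto, uniformity_eq_comap_nhds_zero, tendsto_comap_iff]
    refine tendsto_of_forall_seminorm fun p hp => tendsto_const_nhds.congr' ?_
    filter_upwards [eventually_ge_atTop ((⟨p, hp⟩, ⟨p, hp⟩) : ContinuousSeminorm X × _)]
      with QR hQR
    simpa using (hsmall ⟨p, hp⟩ QR.1 QR.2 hQR.1 hQR.2).symm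
  obtain ⟨x, hx⟩ := cauchySeq_tendsto_of_complete hcauchy
  refine ⟨x, fun P => tendsto_nhds_unique ((P.2.tendsto _).comp (hx.sub_const (φ P)))
    (tendsto_const_nhds.congr' ?_)⟩
  filter_upwards [eventually_ge_atTop P] with Q hQ
  exact (hsmall P P Q le_rfl hQ).symm

end LocallyConvex

section DominatedSetFunction

variable {X : Type*} [AddCommGroup X] [Module ℝ X] [TopologicalSpace X] {μ : Measure Ω}
  {m : Set Ω → X}

theorem tendsto_setIntegral_iUnion_diff_biUnion_range {g : Ω → ℝ} (hg : Integrable g μ)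
    {E : ℕ → Set Ω} (hE : ∀ n, MeasurableSet (E n)) :
    Tendsto (fun N => ∫ t in (⋃ n, E n) \ ⋃ n ∈ Finset.range N, E n, g t ∂μ) atTop
      (𝓝 0) := by
  set S : ℕ → Set Ω := fun N => (⋃ n, E n) \ ⋃ n ∈ Finset.range N, E n
  have hS N : MeasurableSet (S N) :=
    (MeasurableSet.iUnion hE).diff (Finset.measurableSet_biUnion _ fun n _ => hE n)
  have hanti : Antitone S := fun N M hNM => Set.sdiff_subset_sdiff_right
    (Set.iUnion₂_mono' fun n hn => ⟨n, Finset.range_subset_range.2 hNM hn, subset_rfl⟩)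
  have hempty : ⋂ N, S N = ∅ := by
    refine Set.eq_empty_of_forall_notMem fun t ht => ?_
    obtain ⟨n, htn⟩ := Set.mem_iUnion.1 (Set.mem_iInter.1 ht 0).1
    exact (Set.mem_iInter.1 ht (n + 1)).2 (Set.mem_biUnion (Finset.self_mem_range_succ n) htn)
  have := tendsto_setIntegral_of_antitone (μ := μ) (f := g) hS hanti ⟨0, hg.integrableOn⟩
  rwa [hempty, Measure.restrict_empty, integral_zero_measure] at this

variable (hdom : ∀ p : Seminorm ℝ X, Continuous p → ∃ g : Ω → ℝ, Integrable g μ ∧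
  ∀ A, MeasurableSet A → p (m A) ≤ ∫ t in A, g t ∂μ)
include hdom

theorem isVectorMeasureOn_of_dominated [IsTopologicalAddGroup X] [ContinuousSMul ℝ X]
    [LocallyConvexSpace ℝ X]
    (hadd : ∀ A B, MeasurableSet A → MeasurableSet B → Disjoint A B →
      m (A ∪ B) = m A + m B) :
    IsVectorMeasureOn m := by
  intro E hE hdisj
  have hC : IsSetRing {A : Set Ω | MeasurableSet A} :=
    ⟨.empty, fun _ _ => .union, fun _ _ => .diff⟩
  have hempty : m ∅ = 0 := by simpa using hadd ∅ ∅ .empty .empty (Set.disjoint_empty _)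
  let c := hC.addContent_of_union m hempty fun hA hB hAB => hadd _ _ hA hB hAB
  refine tendsto_of_forall_seminorm fun p hp => ?_
  obtain ⟨g, hg, hpg⟩ := hdom p hp
  refine squeeze_zero (fun _ => apply_nonneg _ _) (fun N => ?_)
    (tendsto_setIntegral_iUnion_diff_biUnion_range hg hE)
  set U := ⋃ n ∈ Finset.range N, E n
  have hU : MeasurableSet U := Finset.measurableSet_biUnion _ fun n _ => hE n
  have hsum : ∑ n ∈ Finset.range N, m (E n) = m U :=
    (addContent_biUnion_eq (m := c) hC (fun n _ => hE n) fun i _ j _ hij => hdisj hij).symm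
  have hsplit : m (⋃ n, E n) = m U + m ((⋃ n, E n) \ U) := by
    rw [← hadd _ _ hU ((MeasurableSet.iUnion hE).diff hU) Set.disjoint_sdiff_right,
      Set.union_sdiff_cancel (Set.iUnion₂_subset fun n _ => Set.subset_iUnion E n)]
  rw [hsum, hsplit, sub_add_cancel_left, map_neg_eq_map]
  exact hpg _ ((MeasurableSet.iUnion hE).diff hU)

theorem hasBoundedVariation_of_dominated : HasBoundedVariation m := by
  intro p hp
  obtain ⟨g, hg, hpg⟩ := hdom p hp
  refine ⟨∫ t, g t ∂μ, fun π hπ hdisj hcover => ?_⟩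
  calc ∑ A ∈ π, p (m A) ≤ ∑ A ∈ π, ∫ t in A, g t ∂μ :=
        Finset.sum_le_sum fun A hA => hpg A (hπ A hA)
    _ = ∫ t in ⋃ A ∈ π, A, g t ∂μ :=
        (integral_biUnion_finset π hπ hdisj fun _ _ => hg.integrableOn).symm
    _ = ∫ t, g t ∂μ := by
        rw [← Finset.set_biUnion_coe, ← Set.sUnion_eq_biUnion, hcover, setIntegral_univ]

theorem eq_zero_of_measure_eq_zero_of_dominated [IsTopologicalAddGroup X] [ContinuousSMul ℝ X]
    [LocallyConvexSpace ℝ X] [T2Space X] {Z : Set Ω} (hZ : MeasurableSet Z) (hZ0 : μ Z = 0) :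
    m Z = 0 :=
  eq_of_forall_seminorm_sub_eq_zero fun p hp => by
    obtain ⟨g, -, hpg⟩ := hdom p hp
    rw [sub_zero]
    exact le_antisymm (by simpa [Measure.restrict_zero_set hZ0] using hpg Z hZ) (apply_nonneg _ _)

end DominatedSetFunction

theorem exists_forall_isPIndefiniteIntegral {X : Type*} [AddCommGroup X] [Module ℝ X]
    [UniformSpace X] [IsUniformAddGroup X] [ContinuousSMul ℝ X] [LocallyConvexSpace ℝ X]
    [CompleteSpace X] {μ : Measure Ω} [IsFiniteMeasure μ] {F : Seminorm ℝ X → Ω → X}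
    (hF : ∀ p : Seminorm ℝ X, Continuous p → IsPBochner μ p (F p))
    (hFF : ∀ p q : Seminorm ℝ X, Continuous p → Continuous q → (∀ x, p x ≤ q x) →
      ∃ Z : Set Ω, MeasurableSet Z ∧ μ Z = 0 ∧ ∀ t ∉ Z, p (F p t - F q t) = 0) :
    ∃ m : Set Ω → X, ∀ p : Seminorm ℝ X, Continuous p →
      IsPIndefiniteIntegral μ p (F p) m := by
  choose I hI using fun P : ContinuousSeminorm X => (hF P.1 P.2).exists_isPIndefiniteIntegral
  have hcompat E (hE : MeasurableSet E) (P Q : ContinuousSeminorm X) (hPQ : P ≤ Q) :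
      P.1 (I P E - I Q E) = 0 := by
    obtain ⟨Z, -, hZ, hFZ⟩ := hFF P.1 Q.1 P.2 Q.2 hPQ
    exact (hI P).seminorm_sub_eq_zero_of_ae (hI Q) hPQ
      ((measure_eq_zero_iff_ae_notMem.1 hZ).mono hFZ) hE
  choose! m hm using fun E (hE : MeasurableSet E) =>
    exists_forall_seminorm_sub_eq_zero (I · E) (hcompat E hE)
  exact ⟨m, fun p hp =>
    (hI ⟨p, hp⟩).of_seminorm_sub_eq_zero fun E hE => hm E hE ⟨p, hp⟩⟩

variable {X : Type*} [AddCommGroup X] [Module ℝ X] [UniformSpace X]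
  [IsUniformAddGroup X] [ContinuousSMul ℝ X] [LocallyConvexSpace ℝ X] [T2Space X]
  [CompleteSpace X]
theorem stmt12_general (μ : Measure Ω) [IsFiniteMeasure μ]
    (hRNP : ∀ m : Set Ω → X, IsVectorMeasureOn m → HasBoundedVariation m →
      (∀ Z : Set Ω, MeasurableSet Z → μ Z = 0 → m Z = 0) →
      ∃ f : Ω → X, IntegrableBySeminormWith μ f m) :
    IsBLocallyConvex X μ := by
  intro F hF hFF
  obtain ⟨m, hm⟩ := exists_forall_isPIndefiniteIntegral hF hFF
  have hadd A B (hA : MeasurableSet A) (hB : MeasurableSet B) (hAB : Disjoint A B) :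
      m (A ∪ B) = m A + m B :=
    eq_of_forall_seminorm_sub_eq_zero fun p hp => (hm p hp).seminorm_union_sub_eq_zero hA hB hAB
  have hdom (p : Seminorm ℝ X) (hp : Continuous p) : ∃ g : Ω → ℝ, Integrable g μ ∧
      ∀ A, MeasurableSet A → p (m A) ≤ ∫ t in A, g t ∂μ :=
    ⟨_, (hm p hp).integrable_seminorm, fun _ hA => (hm p hp).seminorm_le_setIntegral hA⟩
  obtain ⟨f, hf⟩ := hRNP m (isVectorMeasureOn_of_dominated hdom hadd)
    (hasBoundedVariation_of_dominated hdom) fun _ hZ hZ0 =>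
      eq_zero_of_measure_eq_zero_of_dominated hdom hZ hZ0
  exact ⟨f, fun p hp => (hf.isPIndefiniteIntegral hp).integral_seminorm_sub_eq_zero (hm p hp)⟩

/-- a complete Hausdorff locally convex space with the
Radon–Nikodym property with respect to `(Ω, Σ, μ)` (every vector measure of
bounded variation which is `μ`-continuous is the indefinite integral of an
integrable by seminorm function) is `B`-locally convex with respect to
`(Ω, Σ, μ)`. -/
theorem stmt12 (μ : Measure Ω) [IsFiniteMeasure μ] [μ.IsComplete]
    (hRNP : ∀ m : Set Ω → X, IsVectorMeasureOn m → HasBoundedVariation m →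
      (∀ Z : Set Ω, MeasurableSet Z → μ Z = 0 → m Z = 0) →
      ∃ f : Ω → X, IntegrableBySeminormWith μ f m) :
    IsBLocallyConvex X μ :=
  stmt12_general μ hRNP
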